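/- The set A_c of allowed chain configurations satisfies the Uniform Exterior Sphere property UES(α) with constant α = r_-²/(2 r_+ n √(2n)). -/

import Mathlib

open scoped RealInnerProductSpace

noncomputable section

variable {H : Type*} [NormedAddCommGroup H] [InnerProductSpace ℝ H]

/-- The set `N^D_{x,α}` of inward unit normal vectors to `D` at `x` with constant `α`. -/
def normalSet (D : Set H) (x : H) (α : ℝ) : Set H :=
  {v | ‖v‖ = 1 ∧ Metric.ball (x - α • v) α ∩ D = ∅}

/-- The set `N^D_x = ⋃_{α>0} N^D_{x,α}` of inward unit normal vectors to `D` at `x`. -/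
def normalCone (D : Set H) (x : H) : Set H :=
  ⋃ α ∈ Set.Ioi (0 : ℝ), normalSet D x α

/-- `D` satisfies the Uniform Exterior Sphere property with constant `α`. -/
def UES (D : Set H) (α : ℝ) : Prop :=
  ∀ x ∈ frontier D, normalCone D x = normalSet D x α ∧ (normalSet D x α).Nonempty

/-- `D` satisfies the Uniform Normal Cone property with constants `β`, `δ`. -/
def UNC (D : Set H) (β δ : ℝ) : Prop :=
  ∀ x ∈ frontier D, ∃ l : H, ‖l‖ = 1 ∧
    ∀ y ∈ frontier D, ‖y - x‖ ≤ δ → ∀ v ∈ normalCone D y, ⟪v, l⟫ ≥ Real.sqrt (1 - β ^ 2)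

/-- The configuration space `ℝ^{dn+2}` of chains of `n` particles in `ℝ^d` together with the
minimum and maximum bond lengths `(x̆₋, x̆₊)`, carrying the Euclidean (`L²`) norm. -/
abbrev CConf (d n : ℕ) : Type :=
  WithLp 2 ((PiLp 2 fun _ : Fin n => EuclideanSpace ℝ (Fin d)) × WithLp 2 (ℝ × ℝ))

variable {d n : ℕ}

/-- Position of the `i`-th particle of the chain. -/
def cC (x : CConf d n) (i : Fin n) : EuclideanSpace ℝ (Fin d) := x.fst i

/-- Minimum allowed bond length `x̆₋`. -/
def cMin (x : CConf d n) : ℝ := x.snd.fst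

/-- Maximum allowed bond length `x̆₊`. -/
def cMax (x : CConf d n) : ℝ := x.snd.snd

/-- Build a chain configuration from particle positions and the two bond-length bounds. -/
def mkC (f : Fin n → EuclideanSpace ℝ (Fin d)) (a b : ℝ) : CConf d n :=
  (WithLp.equiv 2 _).symm ((WithLp.equiv 2 _).symm f, (WithLp.equiv 2 _).symm (a, b))

/-- The set `A_c` of allowed chain configurations. -/
def Ac (d n : ℕ) (rm rp : ℝ) : Set (CConf d n) :=
  {x | rm ≤ cMin x ∧ cMin x ≤ cMax x ∧ cMax x ≤ rp ∧
    ∀ (i : Fin n) (h : (i : ℕ) + 1 < n),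
      cMin x ≤ ‖cC x i - cC x ⟨(i : ℕ) + 1, h⟩‖ ∧
        ‖cC x i - cC x ⟨(i : ℕ) + 1, h⟩‖ ≤ cMax x}

/-- The unit normal vector `n_{i−}(x)` to the constraint `|x_i − x_{i+1}| ≥ x̆₋`, at a
configuration `x` with `|x_i − x_{i+1}| = x̆₋ > 0`. -/
def cnm (x : CConf d n) (i : Fin n) (h : (i : ℕ) + 1 < n) : CConf d n :=
  mkC (fun k =>
      if k = i then (cMin x * Real.sqrt 3)⁻¹ • (cC x i - cC x ⟨(i : ℕ) + 1, h⟩)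
      else if k = ⟨(i : ℕ) + 1, h⟩ then
        (cMin x * Real.sqrt 3)⁻¹ • (cC x ⟨(i : ℕ) + 1, h⟩ - cC x i)
      else 0)
    (-(Real.sqrt 3)⁻¹) 0

/-- The unit normal vector `n_{i+}(x)` to the constraint `|x_i − x_{i+1}| ≤ x̆₊`, at a
configuration `x` with `|x_i − x_{i+1}| = x̆₊ > 0`. -/
def cnp (x : CConf d n) (i : Fin n) (h : (i : ℕ) + 1 < n) : CConf d n :=
  mkC (fun k =>
      if k = i then (cMax x * Real.sqrt 3)⁻¹ • (cC x ⟨(i : ℕ) + 1, h⟩ - cC x i)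
      else if k = ⟨(i : ℕ) + 1, h⟩ then
        (cMax x * Real.sqrt 3)⁻¹ • (cC x i - cC x ⟨(i : ℕ) + 1, h⟩)
      else 0)
    0 (Real.sqrt 3)⁻¹

/-- The unit normal vector `n₋ = (0,…,0,1,0)` to the constraint `x̆₋ ≥ r₋`. -/
def cnmin (d n : ℕ) : CConf d n := mkC 0 1 0

/-- The unit normal vector `n₊ = (0,…,0,0,−1)` to the constraint `x̆₊ ≤ r₊`. -/
def cnmax (d n : ℕ) : CConf d n := mkC 0 0 (-1)

/-- The unit normal vector `n₌ = (0,…,0,−1/√2,1/√2)` to the constraint `x̆₋ ≤ x̆₊`. -/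
def cneq (d n : ℕ) : CConf d n := mkC 0 (-(Real.sqrt 2)⁻¹) (Real.sqrt 2)⁻¹

end

/-!
`A_c` is cut out by finitely many constraints, each affine in the bond lengths
`|x_i - x_{i+1}|` and in `x̆₋`, `x̆₊`. Their slacks are concave, except those of
`x̆₋ ≤ |x_i - x_{i+1}|`, which exceed their linearisation at `x ∈ A_c` by at most
`|y - x|² / x̆₋`. A proximal normal `v` at `x` pairs nonnegatively with every direction along
which one stays in `A_c` for a short time, in particular with every direction increasing all
active slacks, and hence, by continuity, with every direction decreasing none of them to first
order. Apply this to `y - x + (|y - x|² / x̆₋) w`, where `w` increases the slack of every active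
constraint `x̆₋ ≤ |x_i - x_{i+1}|` at unit rate, decreases no other active slack to first order
and has `|w| ≤ n √(2n)`: this gives
`⟪v, x - y⟫ ≤ n √(2n) |x - y|² / r₋`, which is the exterior sphere condition with constant `α`
because `2 α n √(2n) / r₋ = r₋ / r₊ < 1`. Finally, every boundary point has an active
constraint, and its unit normal is a proximal normal.
-/

open scoped RealInnerProductSpace Topology
open Filter

section InnerProductSpace

variable {E : Type*} [NormedAddCommGroup E] [InnerProductSpace ℝ E]

theorem hasDerivAt_norm_add_smul {b : E} (hb : b ≠ 0) (c : E) :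
    HasDerivAt (fun t : ℝ => ‖b + t • c‖) (⟪b, c⟫ / ‖b‖) 0 := by
  have hline : HasDerivAt (fun t : ℝ => b + t • c) c 0 := by
    simpa using ((hasDerivAt_id (0 : ℝ)).smul_const c).const_add b
  convert hline.norm_sq.sqrt (by simpa using hb) using 1
  · simp [Real.sqrt_sq (norm_nonneg _)]
  · simp only [zero_smul, add_zero, Real.sqrt_sq (norm_nonneg _)]
    field_simp

theorem real_inner_div_norm_le_norm (b b' : E) : ⟪b, b'⟫ / ‖b‖ ≤ ‖b'‖ := by
  rcases eq_or_ne b 0 with rfl | hb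
  · simp
  · rw [div_le_iff₀ (norm_pos_iff.2 hb), mul_comm]
    exact real_inner_le_norm b b'

theorem norm_le_norm_add_inner_div_norm_add {b : E} (hb : b ≠ 0) (b' : E) :
    ‖b'‖ ≤ ‖b‖ + ⟪b, b' - b⟫ / ‖b‖ + ‖b' - b‖ ^ 2 / (2 * ‖b‖) := by
  have hb' : 0 < ‖b‖ := norm_pos_iff.2 hb
  have hrhs : ‖b‖ + ⟪b, b' - b⟫ / ‖b‖ + ‖b' - b‖ ^ 2 / (2 * ‖b‖) =
      (‖b'‖ ^ 2 + ‖b‖ ^ 2) / (2 * ‖b‖) := by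
    rw [norm_sub_sq_real, inner_sub_right, real_inner_self_eq_norm_sq, real_inner_comm]
    field_simp
    ring
  rw [hrhs, le_div_iff₀ (by positivity)]
  nlinarith [sq_nonneg (‖b'‖ - ‖b‖)]

end InnerProductSpace

theorem eventually_nonneg_of_hasDerivAt {f : ℝ → ℝ} {f' : ℝ} (hf : HasDerivAt f f' 0)
    (h0 : 0 ≤ f 0) (h' : f 0 = 0 → 0 < f') : ∀ᶠ t in 𝓝[>] 0, 0 ≤ f t := by
  rcases h0.lt_or_eq with hpos | hzero
  · exact ((hf.continuousAt.eventually (lt_mem_nhds hpos)).filter_mono nhdsWithin_le_nhds).mono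
      fun _ => le_of_lt
  · filter_upwards [hf.tendsto_slope_zero_right.eventually (lt_mem_nhds (h' hzero.symm)),
      self_mem_nhdsWithin] with t hslope (ht : 0 < t)
    rw [zero_add, ← hzero, sub_zero, smul_eq_mul] at hslope
    exact ((pos_iff_pos_of_mul_pos hslope).1 (inv_pos.2 ht)).le

section NormalSet

variable {H : Type*} [NormedAddCommGroup H] [InnerProductSpace ℝ H] {D : Set H} {x v : H} {α : ℝ}

theorem mem_normalSet_iff (hα : 0 < α) :
    v ∈ normalSet D x α ↔ ‖v‖ = 1 ∧ ∀ y ∈ D, 2 * α * ⟪v, x - y⟫ ≤ ‖x - y‖ ^ 2 := by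
  refine and_congr_right fun hv => ?_
  have hdist : ∀ y, ‖y - (x - α • v)‖ ^ 2 = ‖x - y‖ ^ 2 - 2 * α * ⟪v, x - y⟫ + α ^ 2 := by
    intro y
    rw [show y - (x - α • v) = α • v - (x - y) by abel, norm_sub_sq_real, norm_smul,
      real_inner_smul_left, hv, Real.norm_eq_abs, abs_of_pos hα]
    ring
  rw [Set.eq_empty_iff_forall_notMem]
  refine forall_congr' fun y => ?_
  rw [Set.mem_inter_iff, Metric.mem_ball, dist_eq_norm, not_and', not_lt]
  refine imp_congr_right fun _ => ?_
  rw [← sq_le_sq₀ hα.le (norm_nonneg _), hdist]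
  constructor <;> intro h <;> linarith

theorem mem_normalSet_of_inner_le {K : ℝ} (hv : ‖v‖ = 1) (hα : 0 < α) (hK : 2 * α * K ≤ 1)
    (h : ∀ y ∈ D, ⟪v, x - y⟫ ≤ K * ‖x - y‖ ^ 2) : v ∈ normalSet D x α := by
  refine (mem_normalSet_iff hα).2 ⟨hv, fun y hy => ?_⟩
  calc 2 * α * ⟪v, x - y⟫ ≤ 2 * α * (K * ‖x - y‖ ^ 2) := by gcongr; exact h y hy
    _ = 2 * α * K * ‖x - y‖ ^ 2 := by ring
    _ ≤ ‖x - y‖ ^ 2 := mul_le_of_le_one_left (sq_nonneg _) hK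

theorem normalSet_subset_normalCone (hα : 0 < α) : normalSet D x α ⊆ normalCone D x :=
  Set.subset_biUnion_of_mem (u := normalSet D x) (show α ∈ Set.Ioi 0 from hα)

theorem norm_eq_one_of_mem_normalCone (hv : v ∈ normalCone D x) : ‖v‖ = 1 := by
  simp only [normalCone, Set.mem_iUnion] at hv
  obtain ⟨_, _, hv⟩ := hv
  exact hv.1

theorem inner_nonneg_of_mem_normalCone {w : H} (hv : v ∈ normalCone D x)
    (hw : ∀ᶠ t in 𝓝[>] (0 : ℝ), x + t • w ∈ D) : 0 ≤ ⟪v, w⟫ := by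
  simp only [normalCone, Set.mem_iUnion, Set.mem_Ioi] at hv
  obtain ⟨β, hβ, hvβ⟩ := hv
  have hD := ((mem_normalSet_iff hβ).1 hvβ).2
  have hsmall : ∀ᶠ t in 𝓝[>] (0 : ℝ), -⟪v, w⟫ ≤ t * (‖w‖ ^ 2 / (2 * β)) := by
    filter_upwards [hw, self_mem_nhdsWithin] with t hxt (ht : 0 < t)
    have h := hD _ hxt
    rw [sub_add_cancel_left, inner_neg_right, norm_neg, norm_smul, real_inner_smul_right,
      Real.norm_eq_abs, abs_of_pos ht] at h
    rw [mul_div_assoc', le_div_iff₀ (by positivity)]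
    nlinarith
  have hlim : Tendsto (fun t : ℝ => t * (‖w‖ ^ 2 / (2 * β))) (𝓝[>] 0) (𝓝 0) :=
    ((continuous_mul_const _).tendsto' 0 0 (zero_mul _)).mono_left nhdsWithin_le_nhds
  linarith [ge_of_tendsto hlim hsmall]

end NormalSet

namespace ChainConf

noncomputable section

variable {d n : ℕ} {rm rp : ℝ} {x y z v w : CConf d n}

@[simp] theorem cC_add (x y : CConf d n) (i : Fin n) : cC (x + y) i = cC x i + cC y i := rfl
@[simp] theorem cC_sub (x y : CConf d n) (i : Fin n) : cC (x - y) i = cC x i - cC y i := rfl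
@[simp] theorem cC_smul (t : ℝ) (x : CConf d n) (i : Fin n) : cC (t • x) i = t • cC x i := rfl
@[simp] theorem cMin_add (x y : CConf d n) : cMin (x + y) = cMin x + cMin y := rfl
@[simp] theorem cMin_sub (x y : CConf d n) : cMin (x - y) = cMin x - cMin y := rfl
@[simp] theorem cMin_smul (t : ℝ) (x : CConf d n) : cMin (t • x) = t * cMin x := rfl
@[simp] theorem cMax_add (x y : CConf d n) : cMax (x + y) = cMax x + cMax y := rfl
@[simp] theorem cMax_sub (x y : CConf d n) : cMax (x - y) = cMax x - cMax y := rfl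
@[simp] theorem cMax_smul (t : ℝ) (x : CConf d n) : cMax (t • x) = t * cMax x := rfl
@[simp] theorem cC_mkC (f : Fin n → EuclideanSpace ℝ (Fin d)) (a b : ℝ) (i : Fin n) :
    cC (mkC f a b) i = f i := rfl

@[fun_prop] theorem continuous_cC (i : Fin n) : Continuous fun x : CConf d n => cC x i := by
  unfold cC; fun_prop
@[fun_prop] theorem continuous_cMin : Continuous (cMin : CConf d n → ℝ) := by
  unfold cMin; fun_prop
@[fun_prop] theorem continuous_cMax : Continuous (cMax : CConf d n → ℝ) := by
  unfold cMax; fun_prop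

theorem inner_eq (z w : CConf d n) :
    ⟪z, w⟫ = ∑ i, ⟪cC z i, cC w i⟫ + cMin z * cMin w + cMax z * cMax w := by
  rw [WithLp.prod_inner_apply, PiLp.inner_apply, WithLp.prod_inner_apply]
  simp only [WithLp.ofLp_fst, PiLp.inner_apply, RCLike.inner_apply, Real.ringHom_apply,
    WithLp.ofLp_snd, cC, cMin, cMax]
  ring

theorem norm_sq_eq (z : CConf d n) :
    ‖z‖ ^ 2 = ∑ i, ‖cC z i‖ ^ 2 + cMin z ^ 2 + cMax z ^ 2 := by
  rw [← real_inner_self_eq_norm_sq, inner_eq]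
  simp only [real_inner_self_eq_norm_sq]
  ring

theorem inner_mkC (f : Fin n → EuclideanSpace ℝ (Fin d)) (a b : ℝ) (w : CConf d n) :
    ⟪mkC f a b, w⟫ = ∑ k, ⟪f k, cC w k⟫ + a * cMin w + b * cMax w := by
  rw [inner_eq]; rfl

theorem norm_sq_mkC (f : Fin n → EuclideanSpace ℝ (Fin d)) (a b : ℝ) :
    ‖mkC f a b‖ ^ 2 = ∑ k, ‖f k‖ ^ 2 + a ^ 2 + b ^ 2 := by
  rw [norm_sq_eq]; rfl

/-- `0` for the last particle, which has no successor. -/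
def bond (x : CConf d n) (i : Fin n) : EuclideanSpace ℝ (Fin d) :=
  if h : (i : ℕ) + 1 < n then cC x i - cC x ⟨i + 1, h⟩ else 0

theorem bond_of_lt (x : CConf d n) {i : Fin n} (h : (i : ℕ) + 1 < n) :
    bond x i = cC x i - cC x ⟨i + 1, h⟩ := dif_pos h

@[simp] theorem bond_add (x y : CConf d n) (i : Fin n) :
    bond (x + y) i = bond x i + bond y i := by
  unfold bond; split_ifs <;> simp only [cC_add, add_zero]; abel

@[simp] theorem bond_sub (x y : CConf d n) (i : Fin n) :
    bond (x - y) i = bond x i - bond y i := by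
  unfold bond; split_ifs <;> simp only [cC_sub, sub_zero]; abel

@[simp] theorem bond_smul (t : ℝ) (x : CConf d n) (i : Fin n) :
    bond (t • x) i = t • bond x i := by
  unfold bond; split_ifs <;> simp only [cC_smul, smul_sub, smul_zero]

@[fun_prop] theorem continuous_bond (i : Fin n) : Continuous fun x : CConf d n => bond x i := by
  unfold bond; split_ifs <;> fun_prop

theorem norm_bond_sq_le (z : CConf d n) (i : Fin n) : ‖bond z i‖ ^ 2 ≤ 2 * ‖z‖ ^ 2 := by
  unfold bond
  split_ifs with h
  · have hpair : ‖cC z i‖ ^ 2 + ‖cC z ⟨i + 1, h⟩‖ ^ 2 ≤ ∑ k, ‖cC z k‖ ^ 2 := by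
      rw [← Finset.sum_pair (f := fun k => ‖cC z k‖ ^ 2) (by simp [Fin.ext_iff])]
      exact Finset.sum_le_sum_of_subset_of_nonneg (Finset.subset_univ _) fun _ _ _ => sq_nonneg _
    have hpar := parallelogram_law_with_norm ℝ (cC z i) (cC z ⟨i + 1, h⟩)
    nlinarith [norm_sq_eq z, sq_nonneg ‖cC z i + cC z ⟨i + 1, h⟩‖, sq_nonneg (cMin z),
      sq_nonneg (cMax z)]
  · simp

def bondRate (x w : CConf d n) (i : Fin n) : ℝ := ⟪bond x i, bond w i⟫ / ‖bond x i‖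

theorem cMin_pos (h0 : 0 < rm) (hx : x ∈ Ac d n rm rp) : 0 < cMin x := h0.trans_le hx.1

theorem cMax_pos (h0 : 0 < rm) (hx : x ∈ Ac d n rm rp) : 0 < cMax x :=
  (cMin_pos h0 hx).trans_le hx.2.1

theorem cMin_le_norm_bond (hx : x ∈ Ac d n rm rp) {i : Fin n} (h : (i : ℕ) + 1 < n) :
    cMin x ≤ ‖bond x i‖ := by
  rw [bond_of_lt x h]; exact (hx.2.2.2 i h).1

theorem bond_ne_zero (h0 : 0 < rm) (hx : x ∈ Ac d n rm rp) {i : Fin n} (h : (i : ℕ) + 1 < n) :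
    bond x i ≠ 0 :=
  norm_pos_iff.1 ((cMin_pos h0 hx).trans_le (cMin_le_norm_bond hx h))

/-- The constraints cutting out `Ac d n rm rp`: `r₋ ≤ x̆₋`, `x̆₊ ≤ r₊`, `x̆₋ ≤ x̆₊`, and
`x̆₋ ≤ |x_i - x_{i+1}|`, `|x_i - x_{i+1}| ≤ x̆₊` for each bond. -/
inductive Constraint (n : ℕ) : Type
  | lower
  | upper
  | order
  | bondMin (i : Fin n) (h : (i : ℕ) + 1 < n)
  | bondMax (i : Fin n) (h : (i : ℕ) + 1 < n)

namespace Constraint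

instance : Finite (Constraint n) := by
  refine Finite.of_injective (β := Fin 3 ⊕ Fin n ⊕ Fin n) (fun c => match c with
    | lower => .inl 0
    | upper => .inl 1
    | order => .inl 2
    | bondMin i _ => .inr (.inl i)
    | bondMax i _ => .inr (.inr i)) ?_
  rintro (_ | _ | _ | ⟨i, hi⟩ | ⟨i, hi⟩) (_ | _ | _ | ⟨j, hj⟩ | ⟨j, hj⟩) h <;> simp_all

def slack (rm rp : ℝ) : Constraint n → CConf d n → ℝ
  | lower, x => cMin x - rm
  | upper, x => rp - cMax x
  | order, x => cMax x - cMin x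
  | bondMin i _, x => ‖bond x i‖ - cMin x
  | bondMax i _, x => cMax x - ‖bond x i‖

def slackDeriv : Constraint n → CConf d n → CConf d n → ℝ
  | lower, _, w => cMin w
  | upper, _, w => -cMax w
  | order, _, w => cMax w - cMin w
  | bondMin i _, x, w => bondRate x w i - cMin w
  | bondMax i _, x, w => cMax w - bondRate x w i

/-- The constraints `x̆₋ ≤ |x_i - x_{i+1}|` are the only ones whose slack is not concave. -/
def curvature : Constraint n → ℝ
  | bondMin _ _ => 1
  | _ => 0

def normal : Constraint n → CConf d n → CConf d n
  | lower, _ => cnmin d n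
  | upper, _ => cnmax d n
  | order, _ => cneq d n
  | bondMin i h, x => cnm x i h
  | bondMax i h, x => cnp x i h

theorem continuous_slack (c : Constraint n) :
    Continuous fun x : CConf d n => c.slack rm rp x := by
  cases c <;> simp only [slack] <;> fun_prop

theorem hasDerivAt_slack (c : Constraint n) (h0 : 0 < rm) (hx : x ∈ Ac d n rm rp)
    (w : CConf d n) :
    HasDerivAt (fun t : ℝ => c.slack rm rp (x + t • w)) (c.slackDeriv x w) 0 := by
  have hline : ∀ a b : ℝ, HasDerivAt (fun t : ℝ => a + t * b) b 0 := fun a b => by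
    simpa using ((hasDerivAt_id (0 : ℝ)).mul_const b).const_add a
  cases c with
  | lower =>
    exact ((hline (cMin x) (cMin w)).sub_const rm).congr_of_eventuallyEq
      (.of_forall fun t => by simp [slack])
  | upper =>
    exact ((hline (cMax x) (cMax w)).const_sub rp).congr_of_eventuallyEq
      (.of_forall fun t => by simp [slack])
  | order =>
    exact ((hline (cMax x) (cMax w)).sub (hline (cMin x) (cMin w))).congr_of_eventuallyEq
      (.of_forall fun t => by simp [slack])
  | bondMin i h =>
    exact ((hasDerivAt_norm_add_smul (bond_ne_zero h0 hx h) (bond w i)).sub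
      (hline (cMin x) (cMin w))).congr_of_eventuallyEq (.of_forall fun t => by simp [slack])
  | bondMax i h =>
    exact ((hline (cMax x) (cMax w)).sub (hasDerivAt_norm_add_smul (bond_ne_zero h0 hx h)
      (bond w i))).congr_of_eventuallyEq (.of_forall fun t => by simp [slack])

theorem slackDeriv_add_smul (c : Constraint n) (x z w : CConf d n) (t : ℝ) :
    c.slackDeriv x (z + t • w) = c.slackDeriv x z + t * c.slackDeriv x w := by
  cases c <;> simp only [slackDeriv, bondRate, cMin_add, cMin_smul, cMax_add, cMax_smul, bond_add,
    bond_smul, inner_add_right, real_inner_smul_right] <;> ring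

theorem slack_le_add_slackDeriv (c : Constraint n) (h0 : 0 < rm) (hx : x ∈ Ac d n rm rp)
    (y : CConf d n) : c.slack rm rp y ≤
      c.slack rm rp x + c.slackDeriv x (y - x) + c.curvature * (‖y - x‖ ^ 2 / cMin x) := by
  cases c with
  | lower => simp only [slack, slackDeriv, curvature, cMin_sub]; linarith
  | upper => simp only [slack, slackDeriv, curvature, cMax_sub]; linarith
  | order => simp only [slack, slackDeriv, curvature, cMin_sub, cMax_sub]; linarith
  | bondMin i h =>
    have hb := bond_ne_zero h0 hx h
    have hlin := norm_le_norm_add_inner_div_norm_add hb (bond y i)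
    have herr : ‖bond y i - bond x i‖ ^ 2 / (2 * ‖bond x i‖) ≤ ‖y - x‖ ^ 2 / cMin x := by
      rw [← bond_sub, div_le_div_iff₀ (by positivity) (cMin_pos h0 hx)]
      nlinarith [norm_bond_sq_le (y - x) i, cMin_le_norm_bond hx h, cMin_pos h0 hx,
        sq_nonneg ‖y - x‖]
    simp only [slack, slackDeriv, curvature, bondRate, bond_sub, cMin_sub, one_mul]
    linarith
  | bondMax i h =>
    have hb := norm_ne_zero_iff.2 (bond_ne_zero h0 hx h)
    have hcs := real_inner_div_norm_le_norm (bond x i) (bond y i)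
    have hself : ⟪bond x i, bond x i⟫ / ‖bond x i‖ = ‖bond x i‖ := by
      rw [real_inner_self_eq_norm_sq, sq, mul_div_assoc, div_self hb, mul_one]
    simp only [slack, slackDeriv, curvature, bondRate, bond_sub, cMax_sub, inner_sub_right,
      sub_div, hself, zero_mul, add_zero]
    linarith

end Constraint

open Constraint

theorem mem_Ac_iff : x ∈ Ac d n rm rp ↔ ∀ c : Constraint n, 0 ≤ c.slack rm rp x := by
  simp only [Ac, Set.mem_ofPred_eq, ← bond_of_lt]
  constructor
  · rintro ⟨h1, h2, h3, h4⟩ (_ | _ | _ | ⟨i, hi⟩ | ⟨i, hi⟩) <;> simp only [slack, sub_nonneg]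
    exacts [h1, h3, h2, (h4 i hi).1, (h4 i hi).2]
  · intro h
    exact ⟨sub_nonneg.1 (h lower), sub_nonneg.1 (h order), sub_nonneg.1 (h upper),
      fun i hi => ⟨sub_nonneg.1 (h (bondMin i hi)), sub_nonneg.1 (h (bondMax i hi))⟩⟩

theorem isClosed_Ac (rm rp : ℝ) : IsClosed (Ac d n rm rp) := by
  have hAc : Ac d n rm rp = ⋂ c : Constraint n, {x | 0 ≤ c.slack rm rp x} := by
    ext x; simp [mem_Ac_iff]
  rw [hAc]
  exact isClosed_iInter fun c => isClosed_le continuous_const c.continuous_slack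

theorem exists_slack_eq_zero_of_mem_frontier (hx : x ∈ frontier (Ac d n rm rp)) :
    x ∈ Ac d n rm rp ∧ ∃ c : Constraint n, c.slack rm rp x = 0 := by
  have hxA := (isClosed_Ac rm rp).frontier_subset hx
  refine ⟨hxA, ?_⟩
  by_contra! h
  have hopen : IsOpen {y : CConf d n | ∀ c : Constraint n, 0 < c.slack rm rp y} := by
    simpa only [Set.ofPred_forall] using
      isOpen_iInter_of_finite fun c : Constraint n => isOpen_lt continuous_const c.continuous_slack
  have hsub : {y : CConf d n | ∀ c : Constraint n, 0 < c.slack rm rp y} ⊆ Ac d n rm rp :=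
    fun y hy => mem_Ac_iff.2 fun c => (hy c).le
  exact hx.2 (interior_maximal hsub hopen fun c => (mem_Ac_iff.1 hxA c).lt_of_ne (h c).symm)

theorem eventually_add_smul_mem_Ac (h0 : 0 < rm) (hx : x ∈ Ac d n rm rp)
    (hw : ∀ c : Constraint n, c.slack rm rp x = 0 → 0 < c.slackDeriv x w) :
    ∀ᶠ t in 𝓝[>] (0 : ℝ), x + t • w ∈ Ac d n rm rp := by
  simp only [mem_Ac_iff]
  refine eventually_all.2 fun c => eventually_nonneg_of_hasDerivAt (c.hasDerivAt_slack h0 hx w)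
    ?_ ?_ <;> simp only [zero_smul, add_zero]
  exacts [mem_Ac_iff.1 hx c, hw c]

def withRates (x : CConf d n) (r : Fin n → ℝ) (p q : ℝ) : CConf d n :=
  mkC (fun k => -∑ j ∈ Finset.Iio k, r j • (‖bond x j‖⁻¹ • bond x j)) p q

@[simp] theorem cMin_withRates (x : CConf d n) (r : Fin n → ℝ) (p q : ℝ) :
    cMin (withRates x r p q) = p := rfl

@[simp] theorem cMax_withRates (x : CConf d n) (r : Fin n → ℝ) (p q : ℝ) :
    cMax (withRates x r p q) = q := rfl

theorem bond_withRates (x : CConf d n) (r : Fin n → ℝ) (p q : ℝ) {j : Fin n}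
    (h : (j : ℕ) + 1 < n) : bond (withRates x r p q) j = r j • (‖bond x j‖⁻¹ • bond x j) := by
  have hIio : Finset.Iio (⟨j + 1, h⟩ : Fin n) = insert j (Finset.Iio j) := by
    ext k; simp [Fin.lt_def]
  rw [bond_of_lt _ h, withRates, cC_mkC, cC_mkC, hIio, Finset.sum_insert Finset.notMem_Iio_self]
  abel

theorem bondRate_withRates (h0 : 0 < rm) (hx : x ∈ Ac d n rm rp) (r : Fin n → ℝ) (p q : ℝ)
    {j : Fin n} (h : (j : ℕ) + 1 < n) : bondRate x (withRates x r p q) j = r j := by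
  have hb := norm_ne_zero_iff.2 (bond_ne_zero h0 hx h)
  rw [bondRate, bond_withRates x r p q h, real_inner_smul_right, real_inner_smul_right,
    real_inner_self_eq_norm_sq]
  field_simp

theorem norm_withRates_sq_le (x : CConf d n) (r : Fin n → ℝ) (p q : ℝ) :
    ‖withRates x r p q‖ ^ 2 ≤ n * (∑ j, |r j|) ^ 2 + p ^ 2 + q ^ 2 := by
  have hk : ∀ k, ‖cC (withRates x r p q) k‖ ≤ ∑ j, |r j| := fun k => by
    rw [withRates, cC_mkC, norm_neg]
    refine (norm_sum_le _ _).trans ((Finset.sum_le_sum fun j _ => ?_).trans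
      (Finset.sum_le_sum_of_subset_of_nonneg (Finset.subset_univ _) fun j _ _ => abs_nonneg _))
    rw [norm_smul, Real.norm_eq_abs]
    refine mul_le_of_le_one_right (abs_nonneg _) ?_
    rcases eq_or_ne (bond x j) 0 with hb | hb
    · simp [hb]
    · rw [norm_smul, norm_inv, norm_norm, inv_mul_cancel₀ (norm_ne_zero_iff.2 hb)]
  have hsum : ∑ k, ‖cC (withRates x r p q) k‖ ^ 2 ≤ n * (∑ j, |r j|) ^ 2 := by
    simpa using Finset.sum_le_sum fun k (_ : k ∈ Finset.univ) =>
      pow_le_pow_left₀ (norm_nonneg _) (hk k) 2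
  rw [norm_sq_eq, cMin_withRates, cMax_withRates]
  linarith

def inwardDir (x : CConf d n) (p q : ℝ) : CConf d n :=
  withRates x (fun j => if ‖bond x j‖ = cMin x then p + 1 else q - 1) p q

theorem max_le_slackDeriv_inwardDir (h0 : 0 < rm) (hx : x ∈ Ac d n rm rp) {p q μ : ℝ}
    (hμ₀ : 0 ≤ μ) (hμ₁ : μ ≤ 1) (hlower : cMin x = rm → μ ≤ p) (hupper : cMax x = rp → μ ≤ -q)
    (horder : cMin x = cMax x → μ ≤ q - p - 1) {c : Constraint n} (hc : c.slack rm rp x = 0) :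
    max μ c.curvature ≤ c.slackDeriv x (inwardDir x p q) := by
  cases c with
  | lower =>
    rw [slack, sub_eq_zero] at hc
    simpa [slackDeriv, curvature, inwardDir, hμ₀] using hlower hc
  | upper =>
    rw [slack, sub_eq_zero] at hc
    simpa [slackDeriv, curvature, inwardDir, hμ₀] using hupper hc.symm
  | order =>
    rw [slack, sub_eq_zero] at hc
    have := horder hc.symm
    simp only [slackDeriv, curvature, inwardDir, cMin_withRates, cMax_withRates, max_le_iff]
    constructor <;> linarith
  | bondMin i h =>
    rw [slack, sub_eq_zero] at hc
    simp [slackDeriv, curvature, inwardDir, bondRate_withRates h0 hx _ _ _ h, hc, hμ₁]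
  | bondMax i h =>
    rw [slack, sub_eq_zero] at hc
    simp only [slackDeriv, curvature, inwardDir, bondRate_withRates h0 hx _ _ _ h,
      cMax_withRates, max_le_iff]
    split_ifs with hmin
    · have := horder (hmin.symm.trans hc.symm)
      constructor <;> linarith
    · constructor <;> linarith

theorem exists_slackDeriv_pos (h0 : 0 < rm) (hr : rm < rp) (hx : x ∈ Ac d n rm rp) :
    ∃ w, ∀ c : Constraint n, c.slack rm rp x = 0 → 0 < c.slackDeriv x w := by
  refine ⟨inwardDir x (if cMin x = rm then 1 else -3) (if cMax x = rp then -1 else 3),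
    fun c hc => zero_lt_one.trans_le ((le_max_left _ _).trans
      (max_le_slackDeriv_inwardDir h0 hx zero_le_one le_rfl ?_ ?_ ?_ hc))⟩
  · intro h; simp [h]
  · intro h; simp [h]
  · intro h; split_ifs <;> linarith

theorem exists_curvature_le_slackDeriv (hn : 2 ≤ n) (h0 : 0 < rm) (hr : rm < rp)
    (hx : x ∈ Ac d n rm rp) : ∃ w, ‖w‖ ≤ n * √(2 * n) ∧
      ∀ c : Constraint n, c.slack rm rp x = 0 → c.curvature ≤ c.slackDeriv x w := by
  set p : ℝ := if cMin x = rm then 0 else -1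
  set q : ℝ := if cMax x = rp then 0 else 1
  refine ⟨inwardDir x p q, ?_, fun c hc => (le_max_right _ _).trans
      (max_le_slackDeriv_inwardDir h0 hx le_rfl zero_le_one ?_ ?_ ?_ hc)⟩
  · have hr : ∀ j, |(if ‖bond x j‖ = cMin x then p + 1 else q - 1)| ≤ 1 := fun j => by
      simp only [p, q]; split_ifs <;> norm_num
    have hsum : ∑ j, |(if ‖bond x j‖ = cMin x then p + 1 else q - 1)| ≤ n :=
      (Finset.sum_le_sum fun j _ => hr j).trans (by simp)
    have hp : p ^ 2 ≤ 1 := by simp only [p]; split_ifs <;> norm_num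
    have hq : q ^ 2 ≤ 1 := by simp only [q]; split_ifs <;> norm_num
    have hn' : (2 : ℝ) ≤ n := by exact_mod_cast hn
    refine (pow_le_pow_iff_left₀ (norm_nonneg _) (by positivity) two_ne_zero).1 ?_
    calc ‖inwardDir x p q‖ ^ 2 ≤ n * n ^ 2 + 1 + 1 := by
          refine (norm_withRates_sq_le _ _ _ _).trans ?_
          gcongr
      _ ≤ (n * √(2 * n)) ^ 2 := by
          rw [mul_pow, Real.sq_sqrt (by positivity)]
          nlinarith
  · intro h; simp [p, h]
  · intro h; simp [q, h]
  · intro h; simp only [p, q]; split_ifs <;> linarith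

theorem sq_norm_sub_div_cMin_le (h0 : 0 < rm) (hx : x ∈ Ac d n rm rp) (y : CConf d n) :
    ‖y - x‖ ^ 2 / cMin x ≤ rm⁻¹ * ‖x - y‖ ^ 2 := by
  rw [norm_sub_rev, inv_mul_eq_div]
  exact div_le_div_of_nonneg_left (sq_nonneg _) h0 hx.1

theorem inner_nonneg_of_slackDeriv_nonneg (h0 : 0 < rm) (hr : rm < rp) (hx : x ∈ Ac d n rm rp)
    (hv : v ∈ normalCone (Ac d n rm rp) x)
    (hz : ∀ c : Constraint n, c.slack rm rp x = 0 → 0 ≤ c.slackDeriv x z) : 0 ≤ ⟪v, z⟫ := by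
  obtain ⟨w, hw⟩ := exists_slackDeriv_pos h0 hr hx
  have hε : ∀ ε : ℝ, 0 < ε → 0 ≤ ⟪v, z⟫ + ε * ⟪v, w⟫ := fun ε hε => by
    rw [← real_inner_smul_right, ← inner_add_right]
    refine inner_nonneg_of_mem_normalCone hv (eventually_add_smul_mem_Ac h0 hx fun c hc => ?_)
    rw [slackDeriv_add_smul]
    exact add_pos_of_nonneg_of_pos (hz c hc) (mul_pos hε (hw c hc))
  have hlim : Tendsto (fun ε : ℝ => ⟪v, z⟫ + ε * ⟪v, w⟫) (𝓝[>] 0) (𝓝 ⟪v, z⟫) :=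
    ((continuous_const.add (continuous_mul_const _)).tendsto' 0 _ (by simp)).mono_left
      nhdsWithin_le_nhds
  exact ge_of_tendsto hlim (eventually_nhdsWithin_of_forall hε)

theorem inner_sub_le_of_mem_normalCone (hn : 2 ≤ n) (h0 : 0 < rm) (hr : rm < rp)
    (hx : x ∈ Ac d n rm rp) (hy : y ∈ Ac d n rm rp) (hv : v ∈ normalCone (Ac d n rm rp) x) :
    ⟪v, x - y⟫ ≤ n * √(2 * n) / rm * ‖x - y‖ ^ 2 := by
  obtain ⟨w, hw_norm, hw⟩ := exists_curvature_le_slackDeriv hn h0 hr hx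
  set E := ‖y - x‖ ^ 2 / cMin x
  have hE : 0 ≤ E := div_nonneg (sq_nonneg _) (cMin_pos h0 hx).le
  have hz : 0 ≤ ⟪v, y - x + E • w⟫ := inner_nonneg_of_slackDeriv_nonneg h0 hr hx hv fun c hc => by
    have hslack := c.slack_le_add_slackDeriv h0 hx y
    have hcurv := mul_le_mul_of_nonneg_left (hw c hc) hE
    rw [slackDeriv_add_smul]
    linarith [mem_Ac_iff.1 hy c]
  rw [inner_add_right, real_inner_smul_right, ← neg_sub x y, inner_neg_right] at hz
  calc ⟪v, x - y⟫ ≤ E * ⟪v, w⟫ := by linarith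
    _ ≤ E * (‖v‖ * ‖w‖) := by gcongr; exact real_inner_le_norm v w
    _ ≤ rm⁻¹ * ‖x - y‖ ^ 2 * (n * √(2 * n)) := by
        rw [norm_eq_one_of_mem_normalCone hv, one_mul]
        gcongr
        exact sq_norm_sub_div_cMin_le h0 hx y
    _ = n * √(2 * n) / rm * ‖x - y‖ ^ 2 := by ring

theorem sum_ite_ite_succ {E M : Type*} [Zero E] [AddCommMonoid M] {i : Fin n}
    (h : (i : ℕ) + 1 < n) (g : Fin n → E → M) (hg : ∀ k, g k 0 = 0) (u u' : E) :
    ∑ k, g k (if k = i then u else if k = ⟨i + 1, h⟩ then u' else 0) =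
      g i u + g ⟨i + 1, h⟩ u' := by
  have hne : i ≠ ⟨i + 1, h⟩ := by simp [Fin.ext_iff]
  rw [Fintype.sum_eq_add i ⟨i + 1, h⟩ hne fun k hk => by simp [hk.1, hk.2, hg]]
  simp [hne.symm]

namespace Constraint

theorem inner_normal (h0 : 0 < rm) (hx : x ∈ Ac d n rm rp) {c : Constraint n}
    (hc : c.slack rm rp x = 0) :
    ∃ κ ∈ Set.Ioc (0 : ℝ) 1, ∀ w, ⟪c.normal x, w⟫ = κ * c.slackDeriv x w := by
  have h2 : (√2)⁻¹ ∈ Set.Ioc (0 : ℝ) 1 :=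
    ⟨by positivity, inv_le_one_of_one_le₀ (Real.one_le_sqrt.2 (by norm_num))⟩
  have h3 : (√3)⁻¹ ∈ Set.Ioc (0 : ℝ) 1 :=
    ⟨by positivity, inv_le_one_of_one_le₀ (Real.one_le_sqrt.2 (by norm_num))⟩
  cases c with
  | lower => exact ⟨1, by simp, fun w => by rw [normal, cnmin, inner_mkC]; simp [slackDeriv]⟩
  | upper => exact ⟨1, by simp, fun w => by rw [normal, cnmax, inner_mkC]; simp [slackDeriv]⟩
  | order =>
    refine ⟨(√2)⁻¹, h2, fun w => ?_⟩
    rw [normal, cneq, inner_mkC]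
    simp only [Pi.zero_apply, inner_zero_left, Finset.sum_const_zero, zero_add, slackDeriv]
    ring
  | bondMin i h =>
    rw [slack, sub_eq_zero, bond_of_lt x h] at hc
    refine ⟨(√3)⁻¹, h3, fun w => ?_⟩
    rw [normal, cnm, inner_mkC,
      sum_ite_ite_succ h (fun k u => ⟪u, cC w k⟫) fun _ => inner_zero_left _]
    simp only [slackDeriv, bondRate, bond_of_lt _ h, hc, real_inner_smul_left, inner_sub_right,
      ← neg_sub (cC x i), inner_neg_left]
    have := cMin_pos h0 hx
    field_simp
    ring
  | bondMax i h =>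
    rw [slack, sub_eq_zero, bond_of_lt x h] at hc
    refine ⟨(√3)⁻¹, h3, fun w => ?_⟩
    rw [normal, cnp, inner_mkC,
      sum_ite_ite_succ h (fun k u => ⟪u, cC w k⟫) fun _ => inner_zero_left _]
    simp only [slackDeriv, bondRate, bond_of_lt _ h, ← hc, real_inner_smul_left, inner_sub_right,
      ← neg_sub (cC x i), inner_neg_left]
    have := cMax_pos h0 hx
    field_simp
    ring

theorem norm_normal (h0 : 0 < rm) (hx : x ∈ Ac d n rm rp) {c : Constraint n}
    (hc : c.slack rm rp x = 0) : ‖c.normal x‖ = 1 := by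
  rw [← pow_eq_one_iff_of_nonneg (norm_nonneg _) two_ne_zero]
  have h3 : √3 ^ 2 = 3 := Real.sq_sqrt (by norm_num)
  cases c with
  | lower => rw [normal, cnmin, norm_sq_mkC]; simp
  | upper => rw [normal, cnmax, norm_sq_mkC]; simp
  | order =>
    rw [normal, cneq, norm_sq_mkC]
    simp only [Pi.zero_apply, norm_zero, neg_sq, inv_pow, Real.sq_sqrt zero_le_two]
    norm_num
  | bondMin i h =>
    rw [slack, sub_eq_zero, bond_of_lt x h] at hc
    rw [normal, cnm, norm_sq_mkC, sum_ite_ite_succ h (fun _ u => ‖u‖ ^ 2) fun _ => by simp]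
    simp only [norm_smul, ← neg_sub (cC x i), norm_neg, hc, mul_pow, norm_inv, Real.norm_eq_abs]
    have := cMin_pos h0 hx
    field_simp
    simp only [sq_abs, mul_pow, h3]
    ring
  | bondMax i h =>
    rw [slack, sub_eq_zero, bond_of_lt x h] at hc
    rw [normal, cnp, norm_sq_mkC, sum_ite_ite_succ h (fun _ u => ‖u‖ ^ 2) fun _ => by simp]
    simp only [norm_smul, ← neg_sub (cC x i), norm_neg, ← hc, mul_pow, norm_inv,
      Real.norm_eq_abs]
    have := cMax_pos h0 hx
    field_simp
    simp only [sq_abs, mul_pow, h3]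
    ring

theorem normal_mem_normalCone (h0 : 0 < rm) (hx : x ∈ Ac d n rm rp) {c : Constraint n}
    (hc : c.slack rm rp x = 0) : c.normal x ∈ normalCone (Ac d n rm rp) x := by
  obtain ⟨κ, ⟨hκ0, hκ1⟩, hκ⟩ := inner_normal h0 hx hc
  refine normalSet_subset_normalCone (half_pos h0) (mem_normalSet_of_inner_le
    (norm_normal h0 hx hc) (half_pos h0) (K := rm⁻¹) (by field_simp; rfl) fun y hy => ?_)
  have hcurv : c.curvature ≤ 1 := by cases c <;> simp [curvature]
  have hslack := c.slack_le_add_slackDeriv h0 hx y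
  have hE : 0 ≤ ‖y - x‖ ^ 2 / cMin x := div_nonneg (sq_nonneg _) (cMin_pos h0 hx).le
  have hderiv : -c.slackDeriv x (y - x) ≤ ‖y - x‖ ^ 2 / cMin x := by
    nlinarith [mem_Ac_iff.1 hy c]
  calc ⟪c.normal x, x - y⟫ = κ * -c.slackDeriv x (y - x) := by
        rw [← neg_sub y x, inner_neg_right, hκ]; ring
    _ ≤ ‖y - x‖ ^ 2 / cMin x := by
        nlinarith [mul_le_mul_of_nonneg_left hderiv hκ0.le, mul_nonneg (sub_nonneg.2 hκ1) hE]
    _ ≤ rm⁻¹ * ‖x - y‖ ^ 2 := sq_norm_sub_div_cMin_le h0 hx y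

end Constraint

end

end ChainConf

theorem stmt_15_general (d n : ℕ) (hn : 2 ≤ n) (rm rp : ℝ)
    (h0 : 0 < rm) (hr : rm < rp) :
    UES (Ac d n rm rp) (rm ^ 2 / (2 * rp * n * Real.sqrt (2 * n))) := by
  intro x hx
  obtain ⟨hxA, c, hc⟩ := ChainConf.exists_slack_eq_zero_of_mem_frontier hx
  have hrp : 0 < rp := h0.trans hr
  have hα : 0 < rm ^ 2 / (2 * rp * n * √(2 * n)) := by positivity
  have hcone : normalCone (Ac d n rm rp) x ⊆
      normalSet (Ac d n rm rp) x (rm ^ 2 / (2 * rp * n * √(2 * n))) := fun v hv => by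
    refine mem_normalSet_of_inner_le (norm_eq_one_of_mem_normalCone hv) hα ?_
      fun y hy => ChainConf.inner_sub_le_of_mem_normalCone hn h0 hr hxA hy hv
    rw [show 2 * (rm ^ 2 / (2 * rp * n * √(2 * n))) * (n * √(2 * n) / rm) = rm / rp by
      field_simp]
    exact (div_le_one hrp).2 hr.le
  exact ⟨hcone.antisymm (normalSet_subset_normalCone hα),
    ⟨_, hcone (c.normal_mem_normalCone h0 hxA hc)⟩⟩

/-- The set `A_c` of allowed chain configurations satisfies the Uniform
Exterior Sphere property with constant `α = r₋²/(2 r₊ n √(2n))`. -/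
theorem stmt_15 (d n : ℕ) (hd : 2 ≤ d) (hn : 2 ≤ n) (rm rp : ℝ)
    (h0 : 0 < rm) (hr : rm < rp) :
    UES (Ac d n rm rp) (rm ^ 2 / (2 * rp * n * Real.sqrt (2 * n))) :=
  stmt_15_general d n hn rm rp h0 hr
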